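/- Let x ∈ ℂ^n with Nx ≠ 0. The quotient function qf_x is constant on ℂ ∖ {rq_{M,N}(x)} if and only if Mx = rq_{M,N}(x)·Nx (i.e., x is an eigenvector of the pencil); in that case its constant value equals the eigenvalue rq_{M,N}(x). -/

import Mathlib

open Matrix Filter Topology
open scoped ComplexOrder

noncomputable def innerP {n : ℕ} (P : Matrix (Fin n) (Fin n) ℂ) (x y : Fin n → ℂ) : ℂ :=
  star y ⬝ᵥ P.mulVec x

noncomputable def normP {n : ℕ} (P : Matrix (Fin n) (Fin n) ℂ) (x : Fin n → ℂ) : ℝ :=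
  Real.sqrt (innerP P x x).re

noncomputable def rq {n : ℕ} (M N P : Matrix (Fin n) (Fin n) ℂ) (x : Fin n → ℂ) : ℂ :=
  innerP P (M.mulVec x) (N.mulVec x) / innerP P (N.mulVec x) (N.mulVec x)

noncomputable def r0 {n : ℕ} (M N P : Matrix (Fin n) (Fin n) ℂ) (x : Fin n → ℂ) : ℝ :=
  normP P (M.mulVec x - rq M N P x • N.mulVec x) / normP P (N.mulVec x)

noncomputable def qf {n : ℕ} (M N P : Matrix (Fin n) (Fin n) ℂ) (x : Fin n → ℂ) (μ : ℂ) : ℂ :=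
  (innerP P ((M - μ • N).mulVec x) (N.mulVec x) /
      ((‖innerP P ((M - μ • N).mulVec x) (N.mulVec x)‖ : ℝ) : ℂ)) *
    ((normP P ((M - μ • N).mulVec x) / normP P (N.mulVec x) : ℝ) : ℂ) + μ

def genSpec {n : ℕ} (M N : Matrix (Fin n) (Fin n) ℂ) : Set ℂ :=
  {l : ℂ | (M - l • N).det = 0}

/-! Write `r = rq M N P x` and `s = r - μ`. The vector `(M - μN)x` splits `P`-orthogonally as
`(Mx - rNx) + s • Nx`, so by Pythagoras `qf x μ = (s / |s|) √(r0² + |s|²) + μ`.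
If `x` is an eigenvector then `r0 = 0` and this is `s + μ = r`. Conversely, the values at
`μ = r ∓ 1` differ by `2 (√(r0² + 1) - 1)`, which vanishes only when `r0 = 0`, i.e. when
`Mx = rNx`. -/

section InnerP

variable {n : ℕ} (P : Matrix (Fin n) (Fin n) ℂ)

lemma innerP_add_left (x x' y : Fin n → ℂ) :
    innerP P (x + x') y = innerP P x y + innerP P x' y := by
  simp only [innerP, mulVec_add, dotProduct_add]

lemma innerP_sub_left (x x' y : Fin n → ℂ) :
    innerP P (x - x') y = innerP P x y - innerP P x' y := by
  simp only [innerP, mulVec_sub, dotProduct_sub]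

lemma innerP_smul_left (a : ℂ) (x y : Fin n → ℂ) :
    innerP P (a • x) y = a * innerP P x y := by
  simp only [innerP, mulVec_smul, dotProduct_smul, smul_eq_mul]

lemma innerP_add_right (x y y' : Fin n → ℂ) :
    innerP P x (y + y') = innerP P x y + innerP P x y' := by
  simp only [innerP, star_add, add_dotProduct]

lemma innerP_smul_right (a : ℂ) (x y : Fin n → ℂ) :
    innerP P x (a • y) = star a * innerP P x y := by
  simp only [innerP, star_smul, smul_dotProduct, smul_eq_mul]

lemma star_innerP {P : Matrix (Fin n) (Fin n) ℂ} (hP : P.IsHermitian) (x y : Fin n → ℂ) :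
    star (innerP P x y) = innerP P y x := by
  rw [innerP, innerP, star_dotProduct, star_mulVec, hP.eq, ← dotProduct_mulVec, star_star]

lemma innerP_self_eq_normP_sq {P : Matrix (Fin n) (Fin n) ℂ} (hP : P.PosSemidef)
    (y : Fin n → ℂ) : innerP P y y = ((normP P y ^ 2 : ℝ) : ℂ) := by
  have hnonneg : 0 ≤ innerP P y y := hP.dotProduct_mulVec_nonneg y
  rw [normP, Real.sq_sqrt (Complex.nonneg_iff.mp hnonneg).1]
  exact Complex.eq_re_of_ofReal_le hnonneg

lemma normP_nonneg (y : Fin n → ℂ) : 0 ≤ normP P y :=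
  Real.sqrt_nonneg _

lemma normP_pos {P : Matrix (Fin n) (Fin n) ℂ} (hP : P.PosDef) {y : Fin n → ℂ} (hy : y ≠ 0) :
    0 < normP P y :=
  Real.sqrt_pos.mpr (Complex.pos_iff.mp (hP.dotProduct_mulVec_pos hy)).1

lemma normP_eq_zero_iff {P : Matrix (Fin n) (Fin n) ℂ} (hP : P.PosDef) {y : Fin n → ℂ} :
    normP P y = 0 ↔ y = 0 := by
  refine ⟨fun h => ?_, fun h => by simp [h, normP, innerP]⟩
  by_contra hy
  exact (normP_pos hP hy).ne' h

lemma normP_add_smul_sq_of_innerP_eq_zero {P : Matrix (Fin n) (Fin n) ℂ} (hP : P.PosSemidef)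
    {w v : Fin n → ℂ} (horth : innerP P w v = 0) (s : ℂ) :
    normP P (w + s • v) ^ 2 = normP P w ^ 2 + ‖s‖ ^ 2 * normP P v ^ 2 := by
  have hexpand : innerP P (w + s • v) (w + s • v) = innerP P w w + s * star s * innerP P v v := by
    simp only [innerP_add_left, innerP_add_right, innerP_smul_left, innerP_smul_right,
      ← star_innerP hP.1 w v, horth, star_zero, mul_zero, add_zero, zero_add]
    ring
  rw [Complex.star_def, Complex.mul_conj, Complex.normSq_eq_norm_sq,
    innerP_self_eq_normP_sq hP, innerP_self_eq_normP_sq hP, innerP_self_eq_normP_sq hP] at hexpand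
  exact_mod_cast hexpand

end InnerP

section Pencil

variable {n : ℕ} (M N : Matrix (Fin n) (Fin n) ℂ) {P : Matrix (Fin n) (Fin n) ℂ} (x : Fin n → ℂ)

lemma innerP_sub_rq_smul_eq_zero (hP : P.PosDef) (hx : N *ᵥ x ≠ 0) :
    innerP P (M *ᵥ x - rq M N P x • N *ᵥ x) (N *ᵥ x) = 0 := by
  have hD : innerP P (N *ᵥ x) (N *ᵥ x) ≠ 0 := (hP.dotProduct_mulVec_pos hx).ne'
  rw [innerP_sub_left, innerP_smul_left, rq, div_mul_cancel₀ _ hD, sub_self]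

lemma sub_smul_mulVec_eq (P : Matrix (Fin n) (Fin n) ℂ) (μ : ℂ) :
    (M - μ • N) *ᵥ x = (M *ᵥ x - rq M N P x • N *ᵥ x) + (rq M N P x - μ) • N *ᵥ x := by
  rw [sub_mulVec, smul_mulVec]
  module

lemma r0_eq_zero_iff (hP : P.PosDef) (hx : N *ᵥ x ≠ 0) :
    r0 M N P x = 0 ↔ M *ᵥ x = rq M N P x • N *ᵥ x := by
  rw [r0, div_eq_zero_iff, normP_eq_zero_iff hP, normP_eq_zero_iff hP, sub_eq_zero, or_iff_left hx]

lemma qf_eq (hP : P.PosDef) (hx : N *ᵥ x ≠ 0) {μ : ℂ} (hμ : μ ≠ rq M N P x) :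
    qf M N P x μ = (rq M N P x - μ) / (‖rq M N P x - μ‖ : ℂ) *
      (√(r0 M N P x ^ 2 + ‖rq M N P x - μ‖ ^ 2) : ℂ) + μ := by
  set s := rq M N P x - μ
  have hs : 0 < ‖s‖ := norm_pos_iff.mpr (sub_ne_zero.mpr hμ.symm)
  have hv : 0 < normP P (N *ᵥ x) := normP_pos hP hx
  have horth := innerP_sub_rq_smul_eq_zero M N x hP hx
  have hinner : innerP P ((M - μ • N) *ᵥ x) (N *ᵥ x) = s * ((normP P (N *ᵥ x) ^ 2 : ℝ) : ℂ) := by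
    rw [sub_smul_mulVec_eq M N x P, innerP_add_left, innerP_smul_left, horth, zero_add,
      innerP_self_eq_normP_sq hP.posSemidef]
  have hnorm : normP P ((M - μ • N) *ᵥ x) / normP P (N *ᵥ x) = √(r0 M N P x ^ 2 + ‖s‖ ^ 2) := by
    have hpyth := normP_add_smul_sq_of_innerP_eq_zero hP.posSemidef horth s
    rw [← sub_smul_mulVec_eq] at hpyth
    rw [← Real.sqrt_sq (div_nonneg (normP_nonneg P _) hv.le), div_pow, hpyth, r0]
    congr 1
    field_simp
  rw [qf, hinner, hnorm, norm_mul, Complex.norm_real, Real.norm_of_nonneg (by positivity)]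
  field_simp
  push_cast
  ring

lemma qf_eq_rq_of_eigen (hP : P.PosDef) (hx : N *ᵥ x ≠ 0)
    (h : M *ᵥ x = rq M N P x • N *ᵥ x) {μ : ℂ} (hμ : μ ≠ rq M N P x) :
    qf M N P x μ = rq M N P x := by
  have hs : (‖rq M N P x - μ‖ : ℂ) ≠ 0 := by simpa using sub_ne_zero.mpr hμ.symm
  rw [qf_eq M N x hP hx hμ, (r0_eq_zero_iff M N x hP hx).mpr h, zero_pow two_ne_zero, zero_add,
    Real.sqrt_sq (norm_nonneg _), div_mul_cancel₀ _ hs, sub_add_cancel]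

lemma r0_eq_zero_of_qf_add_one_eq (hP : P.PosDef) (hx : N *ᵥ x ≠ 0)
    (h : qf M N P x (rq M N P x + 1) = qf M N P x (rq M N P x - 1)) : r0 M N P x = 0 := by
  rw [qf_eq M N x hP hx (by simp), qf_eq M N x hP hx (by simp)] at h
  simp only [sub_add_cancel_left, sub_sub_cancel, norm_neg, norm_one, Complex.ofReal_one,
    div_one, one_pow] at h
  have hsqrt : √(r0 M N P x ^ 2 + 1) = 1 := by
    exact_mod_cast (by linear_combination -h / 2 : ((√(r0 M N P x ^ 2 + 1) : ℝ) : ℂ) = 1)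
  rw [Real.sqrt_eq_one, add_eq_right] at hsqrt
  exact pow_eq_zero_iff two_ne_zero |>.mp hsqrt

end Pencil

theorem stmt_4_general {n : ℕ} (M N P : Matrix (Fin n) (Fin n) ℂ)
    (hP : P.PosDef) (x : Fin n → ℂ) (hx : N.mulVec x ≠ 0) :
    ((∃ c : ℂ, ∀ μ : ℂ, μ ≠ rq M N P x → qf M N P x μ = c) ↔
        M.mulVec x = rq M N P x • N.mulVec x) ∧
      (M.mulVec x = rq M N P x • N.mulVec x →
        ∀ μ : ℂ, μ ≠ rq M N P x → qf M N P x μ = rq M N P x) := by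
  have hconst := fun h μ => qf_eq_rq_of_eigen M N x hP hx h (μ := μ)
  refine ⟨⟨fun ⟨c, hc⟩ => ?_, fun h => ⟨_, hconst h⟩⟩, hconst⟩
  refine (r0_eq_zero_iff M N x hP hx).mp (r0_eq_zero_of_qf_add_one_eq M N x hP hx ?_)
  exact (hc _ (by simp)).trans (hc _ (by simp)).symm

/-- the quotient function is constant on `ℂ \ {rq}` iff `x` is an
eigenvector, in which case the constant value is the Rayleigh quotient. -/
theorem stmt_4 {n : ℕ} (hn : 1 ≤ n) (M N P : Matrix (Fin n) (Fin n) ℂ)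
    (hP : P.PosDef) (x : Fin n → ℂ) (hx : N.mulVec x ≠ 0) :
    ((∃ c : ℂ, ∀ μ : ℂ, μ ≠ rq M N P x → qf M N P x μ = c) ↔
        M.mulVec x = rq M N P x • N.mulVec x) ∧
      (M.mulVec x = rq M N P x • N.mulVec x →
        ∀ μ : ℂ, μ ≠ rq M N P x → qf M N P x μ = rq M N P x) :=
  stmt_4_general M N P hP x hx
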